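/- Let R be an F-finite DVR of characteristic p > 0 with uniformizer r, and let {u_{j,i}^{1/p^e} r^{i/p^e}} be a free R-basis of R^{1/p^e} as in the basis lemma. Fix a basis element x^{1/p^e} = (u_{j,p^e−1} r^{p^e−1})^{1/p^e} (one from the top row i = p^e − 1), and let φ_x : R^{1/p^e} → R be any R-linear map with φ_x(x^{1/p^e}) = 1. Then φ_x generates Hom_R(R^{1/p^e}, R) as an R^{1/p^e}-module. -/

import Mathlib

open scoped BigOperators

section Preamble

variable {Ω : Type*} [Field Ω]

/-- The subring of `p^e`-th roots of elements of a subring `R` of `Ω`. -/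
def pRoots (p : ℕ) [Fact p.Prime] [CharP Ω p] (e : ℕ) (R : Subring Ω) : Subring Ω where
  carrier := {x | x ^ p ^ e ∈ R}
  mul_mem' := fun ha hb => by simpa [mul_pow] using R.mul_mem ha hb
  one_mem' := by simpa using R.one_mem
  add_mem' := fun {a b} ha hb => by
    have h : (a + b) ^ p ^ e = a ^ p ^ e + b ^ p ^ e := add_pow_char_pow a b p e
    simpa [Set.mem_setOf_eq, h] using R.add_mem ha hb
  zero_mem' := by
    simpa [zero_pow (pow_ne_zero e (Fact.out (p := p.Prime)).ne_zero)] using R.zero_mem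
  neg_mem' := fun {a} ha => by
    have h : (-a) ^ p ^ e = (-1 : Ω) ^ p ^ e * a ^ p ^ e := by
      rw [← neg_one_mul, mul_pow]
    show (-a) ^ p ^ e ∈ R
    rcases neg_one_pow_eq_or Ω (p ^ e) with h1 | h1
    · rw [h, h1, one_mul]; exact ha
    · rw [h, h1, neg_one_mul]; exact R.neg_mem ha

/-- `φ : Ω → Ω` restricts to an `A`-linear map from `M` to `N` (all subrings of `Ω`). -/
structure IsLinearOn (A M N : Subring Ω) (φ : Ω → Ω) : Prop where
  maps_to : ∀ x ∈ M, φ x ∈ N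
  map_add : ∀ x ∈ M, ∀ y ∈ M, φ (x + y) = φ x + φ y
  map_smul : ∀ a ∈ A, ∀ x ∈ M, φ (a * x) = a * φ x

/-- The family `b` is a free `A`-module basis of `M` (subrings of `Ω`). -/
def IsBasisOn (A M : Subring Ω) {ι : Type*} [Fintype ι] (b : ι → Ω) : Prop :=
  (∀ i, b i ∈ M) ∧
    ∀ x ∈ M, ∃! c : ι → Ω, (∀ i, c i ∈ A) ∧ x = ∑ i, c i * b i

/-- The fraction field of a subring `R` of `Ω`, as a subfield of `Ω`. -/
def fracField (R : Subring Ω) : Subfield Ω where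
  carrier := {x | ∃ a ∈ R, ∃ b ∈ R, b ≠ 0 ∧ x = a / b}
  mul_mem' := by
    rintro x y ⟨a, ha, b, hb, hb0, rfl⟩ ⟨c, hc, d, hd, hd0, rfl⟩
    exact ⟨a * c, R.mul_mem ha hc, b * d, R.mul_mem hb hd, mul_ne_zero hb0 hd0, by
      field_simp⟩
  one_mem' := ⟨1, R.one_mem, 1, R.one_mem, one_ne_zero, by simp⟩
  add_mem' := by
    rintro x y ⟨a, ha, b, hb, hb0, rfl⟩ ⟨c, hc, d, hd, hd0, rfl⟩
    refine ⟨a * d + c * b, R.add_mem (R.mul_mem ha hd) (R.mul_mem hc hb),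
      b * d, R.mul_mem hb hd, mul_ne_zero hb0 hd0, ?_⟩
    field_simp
  zero_mem' := ⟨0, R.zero_mem, 1, R.one_mem, one_ne_zero, by simp⟩
  neg_mem' := by
    rintro x ⟨a, ha, b, hb, hb0, rfl⟩
    exact ⟨-a, R.neg_mem ha, b, hb, hb0, by ring⟩
  inv_mem' := by
    rintro x ⟨a, ha, b, hb, hb0, rfl⟩
    by_cases ha0 : a = 0
    · exact ⟨0, R.zero_mem, 1, R.one_mem, one_ne_zero, by simp [ha0]⟩
    · exact ⟨b, hb, a, ha, ha0, by field_simp⟩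

/-- Every element of `L` is separable over the subfield `K`. -/
def IsSeparableOn (K L : Subfield Ω) : Prop :=
  ∀ x ∈ L, ∃ f : Polynomial Ω,
    (∀ i, f.coeff i ∈ (K : Set Ω)) ∧ f.Monic ∧ f.Separable ∧ f.eval x = 0

/-- `S` is a finitely generated `R`-module (module-finite inclusion). -/
def IsModuleFiniteOn (A M : Subring Ω) : Prop :=
  ∃ (n : ℕ) (g : Fin n → Ω), (∀ i, g i ∈ M) ∧
    ∀ x ∈ M, ∃ c : Fin n → Ω, (∀ i, c i ∈ A) ∧ x = ∑ i, c i * g i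

/-- `A` is a discrete valuation ring with uniformizer `t`:  `t` is a nonunit of `A`
and every nonzero element of `A` is a unit times a power of `t`. -/
def IsDVRWith (A : Subring Ω) (t : Ω) : Prop :=
  t ∈ A ∧ t ≠ 0 ∧ (¬ ∃ w ∈ A, t * w = 1) ∧
    ∀ x ∈ A, x ≠ 0 → ∃ (k : ℕ) (w : Ω), w ∈ A ∧ (∃ w' ∈ A, w * w' = 1) ∧ x = w * t ^ k

/-- The images of the family `b` (of elements of `M`) form a basis of `M / tM` over
`A / rA`. -/
def IsBasisModOn (A M : Subring Ω) (r t : Ω) {ι : Type*} [Fintype ι] (b : ι → Ω) : Prop :=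
  (∀ j, b j ∈ M) ∧
  (∀ x ∈ M, ∃ c : ι → Ω, (∀ j, c j ∈ A) ∧ ∃ y ∈ M, x - ∑ j, c j * b j = t * y) ∧
  (∀ c : ι → Ω, (∀ j, c j ∈ A) → (∃ y ∈ M, ∑ j, c j * b j = t * y) →
    ∀ j, ∃ a ∈ A, c j = r * a)

/-- `A` is integrally closed in its fraction field (inside `Ω`). -/
def IsNormalOn (A : Subring Ω) : Prop :=
  ∀ x ∈ fracField A, (∃ f : Polynomial Ω, f.Monic ∧ (∀ i, f.coeff i ∈ (A : Set Ω)) ∧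
    f.eval x = 0) → x ∈ A

/-- `A` is F-finite: its ring of `p`-th roots is a finite `A`-module. -/
def IsFFiniteOn (p : ℕ) [Fact p.Prime] [CharP Ω p] (A : Subring Ω) : Prop :=
  IsModuleFiniteOn A (pRoots p 1 A)

end Preamble

/-!
Write `S = R^{1/p^e}` and `q = p^e`. The pairing `(s, a) ↦ φₓ (s * a)` is nondegenerate modulo `r`:
`S` is a DVR with uniformizer `ρ`, so an `s ∉ rS` is a unit times `ρ^k` with `k < q`, and a multiple
of `s` equals `x = u ρ^(q-1)`, on which `φₓ` takes the value `1 ∉ rR`. The products `u i j * ρ^i`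
form a basis of `S / rS` over `R / r`, so the Gram matrix of the pairing on this family has unit
determinant. Solving the Gram system for the values of `ψ` gives `t` with `ψ = φₓ (t * ·)` on the
family; since the family spans `S` modulo `r`, `ψ - φₓ (t * ·)` takes values in `⋂ rⁿR = 0`.
-/

section

variable {Ω : Type*} [Field Ω]

theorem le_pRoots (p : ℕ) [Fact p.Prime] [CharP Ω p] (e : ℕ) (R : Subring Ω) :
    R ≤ pRoots p e R :=
  fun _ hx => pow_mem hx _

namespace IsDVRWith

variable {A : Subring Ω} {t : Ω}

theorem exists_mul_eq_one_of_not_dvd (hA : IsDVRWith A t) {x : Ω} (hx : x ∈ A)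
    (h : ¬ ∃ a ∈ A, x = t * a) : ∃ w ∈ A, x * w = 1 := by
  have hx0 : x ≠ 0 := fun h0 => h ⟨0, A.zero_mem, by simp [h0]⟩
  obtain ⟨k, w, hwA, ⟨w', hw'A, hww'⟩, rfl⟩ := hA.2.2.2 x hx hx0
  cases k with
  | zero => exact ⟨w', hw'A, by simpa using hww'⟩
  | succ k => exact absurd ⟨w * t ^ k, A.mul_mem hwA (pow_mem hA.1 k), by ring⟩ h

theorem eq_zero_of_forall_dvd_pow (hA : IsDVRWith A t) {x : Ω}
    (h : ∀ n : ℕ, ∃ y ∈ A, x = t ^ n * y) : x = 0 := by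
  by_contra hx0
  have hxA : x ∈ A := by
    obtain ⟨y, hy, rfl⟩ := h 0
    simpa using hy
  obtain ⟨k, w, -, ⟨w', hw'A, hww'⟩, hxw⟩ := hA.2.2.2 x hxA hx0
  obtain ⟨y, hyA, hy⟩ := h (k + 1)
  have hw : w = t * y := mul_right_cancel₀ (pow_ne_zero k hA.2.1) <| by
    rw [← hxw, hy]; ring
  exact hA.2.2.1 ⟨y * w', A.mul_mem hyA hw'A, by rw [← mul_assoc, ← hw, hww']⟩

theorem mem_span_singleton_iff (hA : IsDVRWith A t) {x : A} :
    x ∈ Ideal.span {(⟨t, hA.1⟩ : A)} ↔ ∃ a ∈ A, (x : Ω) = t * a := by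
  rw [Ideal.mem_span_singleton']
  constructor
  · rintro ⟨a, rfl⟩
    exact ⟨a, a.2, mul_comm _ _⟩
  · rintro ⟨a, haA, hx⟩
    exact ⟨⟨a, haA⟩, Subtype.ext (hx.trans (mul_comm _ _)).symm⟩

theorem isUnit_of_notMem_span_singleton (hA : IsDVRWith A t) {x : A}
    (hx : x ∉ Ideal.span {(⟨t, hA.1⟩ : A)}) : IsUnit x := by
  obtain ⟨w, hwA, hw⟩ :=
    hA.exists_mul_eq_one_of_not_dvd x.2 (hA.mem_span_singleton_iff.not.mp hx)
  exact .of_mul_eq_one ⟨w, hwA⟩ (Subtype.ext hw)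

theorem isMaximal_span_singleton (hA : IsDVRWith A t) :
    (Ideal.span {(⟨t, hA.1⟩ : A)}).IsMaximal := by
  rw [Ideal.isMaximal_iff]
  refine ⟨fun h1 => ?_, fun J x _ hx hxJ => ?_⟩
  · obtain ⟨a, haA, ha⟩ := hA.mem_span_singleton_iff.mp h1
    exact hA.2.2.1 ⟨a, haA, ha.symm⟩
  · rw [J.eq_top_of_isUnit_mem hxJ (hA.isUnit_of_notMem_span_singleton hx)]
    exact Submodule.mem_top

theorem pRoots_of_pow_eq {p : ℕ} [Fact p.Prime] [CharP Ω p] {e : ℕ} {R : Subring Ω}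
    {r ρ : Ω} (hR : IsDVRWith R r) (hρ : ρ ^ p ^ e = r) : IsDVRWith (pRoots p e R) ρ := by
  have hq : p ^ e ≠ 0 := pow_ne_zero e (Fact.out : p.Prime).ne_zero
  have hρ0 : ρ ≠ 0 := by
    rintro rfl
    exact hR.2.1 (by rw [← hρ, zero_pow hq])
  refine ⟨show ρ ^ p ^ e ∈ R from hρ ▸ hR.1, hρ0, ?_, fun x hx hx0 => ?_⟩
  · rintro ⟨w, hw, hρw⟩
    exact hR.2.2.1 ⟨w ^ p ^ e, hw, by rw [← hρ, ← mul_pow, hρw, one_pow]⟩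
  obtain ⟨k, w, hwR, ⟨w', hw'R, hww'⟩, hxw⟩ := hR.2.2.2 _ hx (pow_ne_zero _ hx0)
  have hρk : (ρ ^ k) ^ p ^ e = r ^ k := by rw [← pow_mul, mul_comm, pow_mul, hρ]
  have hrk : r ^ k ≠ 0 := pow_ne_zero _ hR.2.1
  have hρk0 : ρ ^ k ≠ 0 := pow_ne_zero _ hρ0
  refine ⟨k, x / ρ ^ k, ?_, ⟨ρ ^ k / x, ?_, by field_simp⟩, (div_mul_cancel₀ x hρk0).symm⟩
  · show (x / ρ ^ k) ^ p ^ e ∈ R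
    rwa [div_pow, hρk, hxw, mul_div_cancel_right₀ _ hrk]
  · show (ρ ^ k / x) ^ p ^ e ∈ R
    rwa [div_pow, hρk, hxw, div_mul_cancel_right₀ hrk, ← eq_inv_of_mul_eq_one_right hww']

end IsDVRWith

namespace IsLinearOn

variable {A M N : Subring Ω} {φ ψ : Ω → Ω}

theorem map_zero (hφ : IsLinearOn A M N φ) : φ 0 = 0 := by
  have h := hφ.map_add 0 M.zero_mem 0 M.zero_mem
  rwa [add_zero, left_eq_add] at h

theorem map_sum_mul (hφ : IsLinearOn A M N φ) (hAM : A ≤ M) {ι : Type*} (s : Finset ι)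
    {c x : ι → Ω} (hc : ∀ i, c i ∈ A) (hx : ∀ i, x i ∈ M) :
    φ (∑ i ∈ s, c i * x i) = ∑ i ∈ s, c i * φ (x i) := by
  induction s using Finset.cons_induction with
  | empty => simpa using hφ.map_zero
  | cons a s ha ih =>
    rw [Finset.sum_cons, Finset.sum_cons,
      hφ.map_add _ (M.mul_mem (hAM (hc a)) (hx a)) _
        (sum_mem fun i _ => M.mul_mem (hAM (hc i)) (hx i)),
      ih, hφ.map_smul _ (hc a) _ (hx a)]

theorem sub (hφ : IsLinearOn A M N φ) (hψ : IsLinearOn A M N ψ) :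
    IsLinearOn A M N (fun x => φ x - ψ x) where
  maps_to x hx := N.sub_mem (hφ.maps_to x hx) (hψ.maps_to x hx)
  map_add x hx y hy := by rw [hφ.map_add x hx y hy, hψ.map_add x hx y hy]; ring
  map_smul a ha x hx := by rw [hφ.map_smul a ha x hx, hψ.map_smul a ha x hx]; ring

theorem comp_mul_left (hφ : IsLinearOn A M N φ) {t : Ω} (ht : t ∈ M) :
    IsLinearOn A M N (fun x => φ (t * x)) where
  maps_to x hx := hφ.maps_to _ (M.mul_mem ht hx)
  map_add x hx y hy := by rw [mul_add, hφ.map_add _ (M.mul_mem ht hx) _ (M.mul_mem ht hy)]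
  map_smul a ha x hx := by rw [mul_left_comm, hφ.map_smul a ha _ (M.mul_mem ht hx)]

variable {R : Subring Ω} {r : Ω} {ι : Type*} [Fintype ι] {b : ι → Ω}

theorem exists_map_eq_sum_add (hφ : IsLinearOn R M N φ) (hRM : R ≤ M) (hr : r ∈ R)
    (hb : IsBasisModOn R M r r b) {a : Ω} (ha : a ∈ M) :
    ∃ c : ι → Ω, (∀ i, c i ∈ R) ∧ ∃ y ∈ M, φ a = ∑ i, c i * φ (b i) + r * φ y := by
  obtain ⟨c, hc, y, hy, hay⟩ := hb.2.1 a ha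
  refine ⟨c, hc, y, hy, ?_⟩
  rw [sub_eq_iff_eq_add'.mp hay,
    hφ.map_add _ (sum_mem fun i _ => M.mul_mem (hRM (hc i)) (hb.1 i)) _ (M.mul_mem (hRM hr) hy),
    hφ.map_sum_mul hRM _ hc hb.1, hφ.map_smul r hr y hy]

theorem eq_zero_of_isBasisModOn (hφ : IsLinearOn R M R φ) (hR : IsDVRWith R r) (hRM : R ≤ M)
    (hb : IsBasisModOn R M r r b) (hφb : ∀ i, φ (b i) = 0) {a : Ω} (ha : a ∈ M) : φ a = 0 := by
  refine hR.eq_zero_of_forall_dvd_pow fun n => ?_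
  induction n generalizing a with
  | zero => exact ⟨φ a, hφ.maps_to a ha, by rw [pow_zero, one_mul]⟩
  | succ n ih =>
    obtain ⟨c, -, y, hy, hφa⟩ := hφ.exists_map_eq_sum_add hRM hR.1 hb ha
    obtain ⟨z, hz, hyz⟩ := ih hy
    exact ⟨z, hz, by simp only [hφa, hφb, mul_zero, Finset.sum_const_zero, hyz]; ring⟩

end IsLinearOn

theorem exists_sum_pow_mul_add {M : Subring Ω} {ρ : Ω} :
    ∀ {n : ℕ} (V : Fin n → Set Ω), (∀ i, ∀ a ∈ M, ∃ v ∈ V i, ∃ y ∈ M, a = v + ρ * y) →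
      ∀ a ∈ M, ∃ v : Fin n → Ω, (∀ i, v i ∈ V i) ∧
        ∃ y ∈ M, a = ∑ i : Fin n, ρ ^ (i : ℕ) * v i + ρ ^ n * y
  | 0, _, _, a, ha => ⟨Fin.elim0, fun i => i.elim0, a, ha, by simp⟩
  | n + 1, V, hV, a, ha => by
    obtain ⟨v₀, hv₀, y₀, hy₀, rfl⟩ := hV 0 a ha
    obtain ⟨v, hv, y, hy, rfl⟩ :=
      exists_sum_pow_mul_add (fun i => V i.succ) (fun i => hV i.succ) y₀ hy₀
    refine ⟨Fin.cons v₀ v, Fin.cases hv₀ hv, y, hy, ?_⟩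
    simp only [Fin.sum_univ_succ, Fin.cons_zero, Fin.cons_succ, Fin.val_zero, Fin.val_succ,
      pow_zero, one_mul, mul_add, Finset.mul_sum, pow_succ', mul_assoc, add_assoc]

-- `hlift` cannot be dropped: `ρ ^ 0 * ρ + ρ ^ 1 * (-1) = 0`, yet `-1` is not divisible by `ρ`.
theorem forall_dvd_of_sum_pow_mul_dvd {M : Subring Ω} {ρ : Ω} (hρM : ρ ∈ M) (hρ0 : ρ ≠ 0) :
    ∀ {n : ℕ} (v : Fin n → Ω), (∀ i, v i ∈ M) →
      (∀ i, (∃ y ∈ M, v i = ρ * y) → ∃ y ∈ M, v i = ρ ^ n * y) →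
      (∃ y ∈ M, ∑ i : Fin n, ρ ^ (i : ℕ) * v i = ρ ^ n * y) → ∀ i, ∃ y ∈ M, v i = ρ * y
  | 0, _, _, _, _, i => i.elim0
  | n + 1, v, hv, hlift, ⟨y, hy, hsum⟩, i => by
    set T := ∑ i : Fin n, ρ ^ (i : ℕ) * v i.succ
    have hT : T ∈ M := sum_mem fun i _ => M.mul_mem (pow_mem hρM _) (hv _)
    have hsum' : v 0 + ρ * T = ρ ^ (n + 1) * y := by
      rw [← hsum, Fin.sum_univ_succ]
      simp only [T, Finset.mul_sum, Fin.val_zero, Fin.val_succ, pow_zero, one_mul, pow_succ',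
        mul_assoc]
    have h0 : ∃ y ∈ M, v 0 = ρ * y :=
      ⟨ρ ^ n * y - T, M.sub_mem (M.mul_mem (pow_mem hρM n) hy) hT, by
        linear_combination hsum'⟩
    obtain ⟨y₀, hy₀, hv₀⟩ := hlift 0 h0
    have hT' : ∃ y ∈ M, T = ρ ^ n * y :=
      ⟨y - y₀, M.sub_mem hy hy₀, mul_left_cancel₀ hρ0 (by linear_combination hsum' - hv₀)⟩
    have ih := forall_dvd_of_sum_pow_mul_dvd hρM hρ0 (fun i => v i.succ) (fun i => hv _)
      (fun i hi => by
        obtain ⟨z, hz, hvz⟩ := hlift _ hi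
        exact ⟨ρ * z, M.mul_mem hρM hz, by rw [hvz]; ring⟩) hT'
    exact Fin.cases h0 ih i

theorem IsBasisModOn.mul_pow {R M : Subring Ω} {r ρ : Ω} {n : ℕ} {ι : Type*} [Fintype ι]
    {u : Fin n → ι → Ω} (hRM : R ≤ M) (hρM : ρ ∈ M) (hρ0 : ρ ≠ 0) (hρ : ρ ^ n = r)
    (hu : ∀ i, IsBasisModOn R M r ρ (u i)) :
    IsBasisModOn R M r r (fun α : Fin n × ι => u α.1 α.2 * ρ ^ (α.1 : ℕ)) := by
  have hrows : ∀ c : Fin n × ι → Ω, ∑ α, c α * (u α.1 α.2 * ρ ^ (α.1 : ℕ)) =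
      ∑ i : Fin n, ρ ^ (i : ℕ) * ∑ j, c (i, j) * u i j := fun c => by
    rw [Fintype.sum_prod_type]
    refine Finset.sum_congr rfl fun i _ => ?_
    rw [Finset.mul_sum]
    exact Finset.sum_congr rfl fun j _ => by ring
  refine ⟨fun α => M.mul_mem ((hu α.1).1 α.2) (pow_mem hρM _), fun a ha => ?_,
    fun c hc ⟨y, hy, hcy⟩ α => ?_⟩
  · obtain ⟨v, hv, y, hy, rfl⟩ := exists_sum_pow_mul_add
      (fun i => {x | ∃ c : ι → Ω, (∀ j, c j ∈ R) ∧ x = ∑ j, c j * u i j})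
      (fun i a ha => by
        obtain ⟨c, hc, y, hy, hay⟩ := (hu i).2.1 a ha
        exact ⟨_, ⟨c, hc, rfl⟩, y, hy, sub_eq_iff_eq_add'.mp hay⟩) a ha
    choose c hc hvc using hv
    refine ⟨fun α => c α.1 α.2, fun α => hc _ _, y, hy, ?_⟩
    rw [hrows, ← hρ]
    simp only [← hvc]
    ring
  · have hrow := forall_dvd_of_sum_pow_mul_dvd hρM hρ0 (fun i => ∑ j, c (i, j) * u i j)
      (fun i => sum_mem fun j _ => M.mul_mem (hRM (hc _)) ((hu i).1 j))
      (fun i hi => by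
        choose a ha hca using (hu i).2.2 _ (fun j => hc _) hi
        refine ⟨∑ j, a j * u i j, sum_mem fun j _ => M.mul_mem (hRM (ha j)) ((hu i).1 j), ?_⟩
        simp only [hρ, hca, Finset.mul_sum, mul_assoc])
      ⟨y, hy, by rw [← hrows, hcy, hρ]⟩
    exact (hu α.1).2.2 (fun j => c (α.1, j)) (fun j => hc _) (hrow α.1) α.2

/-- The pairing `(s, a) ↦ φ (s * a)` is nondegenerate on `M / rM`. -/
def IsNondegenerateModOn (R M : Subring Ω) (r : Ω) (φ : Ω → Ω) : Prop :=
  ∀ s ∈ M, (∀ a ∈ M, ∃ z ∈ R, φ (s * a) = r * z) → ∃ y ∈ M, s = r * y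

theorem isNondegenerateModOn_of_apply_eq_one {R M : Subring Ω} {r ρ u : Ω} {n : ℕ}
    {φ : Ω → Ω} (hR : IsDVRWith R r) (hM : IsDVRWith M ρ) (hρ : ρ ^ n = r) (hu : u ∈ M)
    (hφ : φ (u * ρ ^ (n - 1)) = 1) : IsNondegenerateModOn R M r φ := by
  intro s hs h
  by_cases hs0 : s = 0
  · exact ⟨0, M.zero_mem, by simp [hs0]⟩
  obtain ⟨k, w, hwM, ⟨w', hw'M, hww'⟩, rfl⟩ := hM.2.2.2 s hs hs0
  by_cases hk : n ≤ k
  · obtain ⟨j, rfl⟩ := Nat.exists_eq_add_of_le hk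
    exact ⟨w * ρ ^ j, M.mul_mem hwM (pow_mem hM.1 j), by rw [← hρ]; ring⟩
  obtain ⟨z, hz, hφz⟩ :=
    h (w' * u * ρ ^ (n - 1 - k)) (M.mul_mem (M.mul_mem hw'M hu) (pow_mem hM.1 _))
  have hx : w * ρ ^ k * (w' * u * ρ ^ (n - 1 - k)) = u * ρ ^ (n - 1) := by
    calc _ = (w * w') * u * ρ ^ (k + (n - 1 - k)) := by ring
      _ = u * ρ ^ (n - 1) := by rw [hww', Nat.add_sub_cancel' (by omega), one_mul]
  rw [hx, hφ] at hφz
  exact (hR.2.2.1 ⟨z, hz, hφz.symm⟩).elim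

section Gram

variable {R M : Subring Ω} {r : Ω} {ι : Type*} [Fintype ι] {b : ι → Ω} {φ : Ω → Ω}

def gramMatrix (hφ : IsLinearOn R M R φ) (hb : ∀ i, b i ∈ M) : Matrix ι ι R :=
  fun β α => ⟨φ (b α * b β), hφ.maps_to _ (M.mul_mem (hb α) (hb β))⟩

theorem coe_gramMatrix_mulVec (hφ : IsLinearOn R M R φ) (hRM : R ≤ M) (hb : ∀ i, b i ∈ M)
    (c : ι → R) (β : ι) :
    ((gramMatrix hφ hb).mulVec c β : Ω) = φ ((∑ α, (c α : Ω) * b α) * b β) := by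
  simp only [Finset.sum_mul, mul_assoc]
  rw [hφ.map_sum_mul hRM _ (fun α => (c α).2) (fun α => M.mul_mem (hb α) (hb β))]
  simp only [Matrix.mulVec, dotProduct, gramMatrix, AddSubmonoidClass.coe_finsetSum,
    Subring.coe_mul, mul_comm]

theorem isUnit_det_gramMatrix [DecidableEq ι] (hR : IsDVRWith R r) (hRM : R ≤ M)
    (hb : IsBasisModOn R M r r b) (hφ : IsLinearOn R M R φ)
    (hnd : IsNondegenerateModOn R M r φ) : IsUnit (gramMatrix hφ hb.1).det := by
  set I := Ideal.span {(⟨r, hR.1⟩ : R)}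
  have := hR.isMaximal_span_singleton
  let : Field (R ⧸ I) := Ideal.Quotient.field I
  refine hR.isUnit_of_notMem_span_singleton fun hdet => ?_
  obtain ⟨v, hv0, hv⟩ := Matrix.exists_mulVec_eq_zero_iff
      (M := (Ideal.Quotient.mk I).mapMatrix (gramMatrix hφ hb.1)) |>.mpr <| by
    rw [← RingHom.map_det, Ideal.Quotient.eq_zero_iff_mem]
    exact hdet
  choose c hc using fun α => Ideal.Quotient.mk_surjective (I := I) (v α)
  set s := ∑ α, (c α : Ω) * b α
  have hs : s ∈ M := sum_mem fun α _ => M.mul_mem (hRM (c α).2) (hb.1 α)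
  have hGc : ∀ β, ∃ z ∈ R, φ (s * b β) = r * z := fun β => by
    rw [← coe_gramMatrix_mulVec hφ hRM hb.1 c β, ← hR.mem_span_singleton_iff,
      ← Ideal.Quotient.eq_zero_iff_mem, RingHom.map_mulVec, show _ ∘ c = v from funext hc]
    exact congrFun hv β
  obtain ⟨y, hy, hsy⟩ := hnd s hs fun a ha => by
    obtain ⟨d, hd, y, hy, hφa⟩ := (hφ.comp_mul_left hs).exists_map_eq_sum_add hRM hR.1 hb ha
    choose z hz hφz using hGc
    refine ⟨∑ i, d i * z i + φ (s * y), R.add_mem (sum_mem fun i _ => R.mul_mem (hd i) (hz i))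
      (hφ.maps_to _ (M.mul_mem hs hy)), ?_⟩
    simp only [hφa, hφz, mul_add, Finset.mul_sum, mul_left_comm]
  refine hv0 (funext fun α => ?_)
  rw [← hc α, Pi.zero_apply, Ideal.Quotient.eq_zero_iff_mem, hR.mem_span_singleton_iff]
  exact hb.2.2 (fun α => c α) (fun α => (c α).2) ⟨y, hy, hsy⟩ α

theorem IsNondegenerateModOn.exists_eq_comp_mul {ψ : Ω → Ω}
    (hnd : IsNondegenerateModOn R M r φ) (hR : IsDVRWith R r) (hRM : R ≤ M)
    (hb : IsBasisModOn R M r r b) (hφ : IsLinearOn R M R φ) (hψ : IsLinearOn R M R ψ) : ∃ t ∈ M, ∀ a ∈ M, ψ a = φ (t * a) := by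
  classical
  set G := gramMatrix hφ hb.1
  set v : ι → R := fun β => ⟨ψ (b β), hψ.maps_to _ (hb.1 β)⟩
  set d := G⁻¹.mulVec v
  have hGd : G.mulVec d = v := by
    rw [Matrix.mulVec_mulVec, Matrix.mul_nonsing_inv _ (isUnit_det_gramMatrix hR hRM hb hφ hnd),
      Matrix.one_mulVec]
  set t := ∑ α, (d α : Ω) * b α
  have ht : t ∈ M := sum_mem fun α _ => M.mul_mem (hRM (d α).2) (hb.1 α)
  refine ⟨t, ht, fun a ha => sub_eq_zero.mp ?_⟩
  refine (hψ.sub (hφ.comp_mul_left ht)).eq_zero_of_isBasisModOn hR hRM hb (fun β => ?_) ha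
  show ψ (b β) - φ (t * b β) = 0
  rw [sub_eq_zero, ← coe_gramMatrix_mulVec hφ hRM hb.1 d β, hGd]

end Gram

end

theorem generator_of_hom_of_DVR_general {Ω : Type*} [Field Ω] (p : ℕ) [Fact p.Prime] [CharP Ω p]
    (R : Subring Ω) (r ρ : Ω) (hR : IsDVRWith R r)
    (e m : ℕ) (hρ : ρ ^ p ^ e = r)
    (u : Fin (p ^ e) → Fin m → Ω)
    (hu : ∀ i, IsBasisModOn R (pRoots p e R) r ρ (u i))
    (itop : Fin (p ^ e)) (j₀ : Fin m)
    (φx : Ω → Ω) (hlin : IsLinearOn R (pRoots p e R) R φx)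
    (hval : φx (u itop j₀ * ρ ^ (p ^ e - 1)) = 1) :
    ∀ ψ : Ω → Ω, IsLinearOn R (pRoots p e R) R ψ →
      ∃ t ∈ pRoots p e R, ∀ a ∈ pRoots p e R, ψ a = φx (t * a) := by
  intro ψ hψ
  have hS : IsDVRWith (pRoots p e R) ρ := hR.pRoots_of_pow_eq hρ
  have hnd := isNondegenerateModOn_of_apply_eq_one hR hS hρ ((hu itop).1 j₀) hval
  have hb := IsBasisModOn.mul_pow (le_pRoots p e R) hS.1 hS.2.1 hρ hu
  exact hnd.exists_eq_comp_mul hR (le_pRoots p e R) hb hlin hψ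

/-- with a free basis of `R^{1/p^e}` as in the basis lemma, any `R`-linear map
`φₓ` sending a top-row basis element `u (p^e-1) j₀ * r^{(p^e-1)/p^e}` to `1` generates
`Hom_R(R^{1/p^e}, R)` as an `R^{1/p^e}`-module. -/
theorem generator_of_hom_of_DVR {Ω : Type*} [Field Ω] (p : ℕ) [Fact p.Prime] [CharP Ω p]
    (R : Subring Ω) (r ρ : Ω) (hR : IsDVRWith R r)
    (e m : ℕ) (hρ : ρ ^ p ^ e = r)
    (u : Fin (p ^ e) → Fin m → Ω)
    (hu : ∀ i, IsBasisModOn R (pRoots p e R) r ρ (u i))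
    (itop : Fin (p ^ e)) (hitop : (itop : ℕ) = p ^ e - 1) (j₀ : Fin m)
    (φx : Ω → Ω) (hlin : IsLinearOn R (pRoots p e R) R φx)
    (hval : φx (u itop j₀ * ρ ^ (p ^ e - 1)) = 1) :
    ∀ ψ : Ω → Ω, IsLinearOn R (pRoots p e R) R ψ →
      ∃ t ∈ pRoots p e R, ∀ a ∈ pRoots p e R, ψ a = φx (t * a) :=
  generator_of_hom_of_DVR_general p R r ρ hR e m hρ u hu itop j₀ φx hlin hval
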